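/- Every face of the generalized power cone P^α_{m,n} is exposed; more strongly, for every face F of P^α_{m,n} there exists a linear map P on ℝ^{m+n} with P² = P and P(P^α_{m,n}) = F (i.e., P^α_{m,n} is projectionally exposed). -/

import Mathlib

open Finset

noncomputable section

abbrev E (m n : ℕ) : Type := WithLp 2 (EuclideanSpace ℝ (Fin m) × EuclideanSpace ℝ (Fin n))

def PowCone (m n : ℕ) (α : Fin n → ℝ) : Set (E m n) :=
  {x | (∀ i, 0 ≤ x.ofLp.2 i) ∧ ‖x.ofLp.1‖ ≤ ∏ i, x.ofLp.2 i ^ α i}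

/-!
A face `F` of `K = P^α_{m,n}` (points `x = (x̄, x̃)`) is of one of three kinds.

* `F` meets the interior of `K`: then `F = K`.
* `F` contains some `x₀` with `x̄₀ ≠ 0` (so `x̃₀ > 0`) but no interior point: then every `s ∈ F`
  with `s̃ > 0` satisfies `‖s̄‖ = ∏ s̃ᵢ^αᵢ`. At such `s` the gradient `z_s` of `∏ x̃ᵢ^αᵢ - ‖x̄‖` is
  nonnegative on `K` and vanishes on `K` exactly along the ray through `s` (equality in weighted
  AM-GM and in Cauchy-Schwarz). Taking `s = x₀ + y` for `y ∈ F` puts `y` on the ray through `x₀`,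
  so `F` is that ray: it is exposed by `z_{x₀}` and is the image of `K` under
  `x ↦ (∑ x̃ᵢ / ∑ x̃₀ᵢ) • x₀`.
* `x̄ = 0` on `F`: then `F = {(0, x̃) : x̃ ≥ 0, x̃ᵢ = 0 for i ∉ J}` with `J` the support of a point
  of `F` of maximal support, the image of `K` under restriction of `x̃` to `J`. Since `(0, ỹ)` with
  `ỹ > 0` is the midpoint of `(±v, ỹ)` for `‖v‖ = ∏ ỹᵢ^αᵢ > 0`, `J` misses some index, so the
  indicator of the coordinates outside `J` exposes `F`.
-/

open scoped RealInnerProductSpace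
open Filter Topology

section WeightedAMGM

variable {ι : Type*} [Fintype ι] {w b x : ι → ℝ}

lemma prod_div_rpow (hb : ∀ i, 0 < b i) (hx : ∀ i, 0 ≤ x i) :
    ∏ i, (x i / b i) ^ w i = (∏ i, x i ^ w i) / ∏ i, b i ^ w i := by
  simp_rw [Real.div_rpow (hx _) (hb _).le, prod_div_distrib]

lemma prod_rpow_le_mul_sum (hw : ∀ i, 0 ≤ w i) (hwsum : ∑ i, w i = 1) (hb : ∀ i, 0 < b i)
    (hx : ∀ i, 0 ≤ x i) :
    ∏ i, x i ^ w i ≤ (∏ i, b i ^ w i) * ∑ i, w i * (x i / b i) := by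
  have hB : 0 < ∏ i, b i ^ w i := prod_pos fun i _ => Real.rpow_pos_of_pos (hb i) _
  have hamgm := Real.geom_mean_le_arith_mean_weighted univ w (fun i => x i / b i)
    (fun i _ => hw i) hwsum fun i _ => div_nonneg (hx i) (hb i).le
  rw [prod_div_rpow hb hx, div_le_iff₀ hB] at hamgm
  linarith

lemma eq_mul_of_prod_rpow_eq_mul_sum (hw : ∀ i, 0 < w i) (hwsum : ∑ i, w i = 1)
    (hb : ∀ i, 0 < b i) (hx : ∀ i, 0 ≤ x i)
    (h : ∏ i, x i ^ w i = (∏ i, b i ^ w i) * ∑ i, w i * (x i / b i)) (i : ι) :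
    x i = (∑ j, w j * (x j / b j)) * b i := by
  have hB : 0 < ∏ i, b i ^ w i := prod_pos fun i _ => Real.rpow_pos_of_pos (hb i) _
  have hgeom : ∏ i, (x i / b i) ^ w i = ∑ i, w i * (x i / b i) := by
    rw [prod_div_rpow hb hx, h, mul_div_cancel_left₀ _ hB.ne']
  have hconst := (Real.geom_mean_eq_arith_mean_weighted_iff_of_pos' univ w (fun i => x i / b i)
    (fun i _ => hw i) hwsum fun i _ => div_nonneg (hx i) (hb i).le).1 hgeom i (mem_univ i)
  rw [← hconst, div_mul_cancel₀ _ (hb i).ne']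

end WeightedAMGM

section ConeFace

variable {V : Type*} [AddCommGroup V] [Module ℝ V]

structure IsConeFace (K F : Set V) : Prop where
  nonempty : F.Nonempty
  convex : Convex ℝ F
  smul_mem : ∀ x ∈ F, ∀ c : ℝ, 0 ≤ c → c • x ∈ F
  subset : F ⊆ K
  mem_of_add_mem : ∀ x ∈ K, ∀ y ∈ K, x + y ∈ F → x ∈ F ∧ y ∈ F

def ray (b : V) : Set V := {x | ∃ c : ℝ, 0 ≤ c ∧ c • b = x}

namespace IsConeFace

variable {K F : Set V}

lemma zero_mem (hF : IsConeFace K F) : (0 : V) ∈ F := by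
  obtain ⟨x, hx⟩ := hF.nonempty
  simpa using hF.smul_mem x hx 0 le_rfl

lemma add_mem (hF : IsConeFace K F) {x y : V} (hx : x ∈ F) (hy : y ∈ F) : x + y ∈ F := by
  have hmid := hF.convex hx hy (by norm_num : (0 : ℝ) ≤ 1 / 2) (by norm_num : (0 : ℝ) ≤ 1 / 2)
    (by norm_num)
  convert hF.smul_mem _ hmid 2 zero_le_two using 1
  module

lemma sum_mem (hF : IsConeFace K F) {ι : Type*} (s : Finset ι) {f : ι → V}
    (hf : ∀ i ∈ s, f i ∈ F) : ∑ i ∈ s, f i ∈ F :=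
  AddSubmonoid.sum_mem ⟨⟨F, hF.add_mem⟩, hF.zero_mem⟩ hf

end IsConeFace

lemma exists_idempotent_image_eq_ray {K : Set V} (f : V →ₗ[ℝ] ℝ) {b : V} (hfb : f b = 1)
    (hf : ∀ x ∈ K, 0 ≤ f x) (hb : ∀ c : ℝ, 0 ≤ c → c • b ∈ K) :
    ∃ P : V →ₗ[ℝ] V, P ∘ₗ P = P ∧ P '' K = ray b := by
  refine ⟨f.smulRight b, LinearMap.ext fun x => by simp [hfb], Set.Subset.antisymm ?_ ?_⟩
  · rintro _ ⟨x, hx, rfl⟩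
    exact ⟨f x, hf x hx, rfl⟩
  · rintro _ ⟨c, hc, rfl⟩
    exact ⟨c • b, hb c hc, by simp [hfb]⟩

end ConeFace

section NormedConeFace

variable {V : Type*} [NormedAddCommGroup V] [NormedSpace ℝ V] {K F : Set V}

lemma IsConeFace.eq_of_mem_interior (hF : IsConeFace K F)
    (hK : ∀ x ∈ K, ∀ c : ℝ, 0 ≤ c → c • x ∈ K) {w : V} (hwF : w ∈ F) (hw : w ∈ interior K) :
    F = K := by
  refine hF.subset.antisymm fun y hy => ?_
  -- `w - ε • y ∈ K` for some `ε > 0`, so `ε • y` is a summand of `w ∈ F`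
  have hlim : Tendsto (fun ε : ℝ => w - ε • y) (𝓝 0) (𝓝 w) := by
    simpa using (show Continuous fun ε : ℝ => w - ε • y by fun_prop).tendsto 0
  obtain ⟨ε, hεK, hε⟩ := ((hlim.eventually (mem_interior_iff_mem_nhds.1 hw)).filter_mono
    nhdsWithin_le_nhds |>.and (self_mem_nhdsWithin (s := Set.Ioi 0))).exists
  have hεy := (hF.mem_of_add_mem _ (hK y hy ε (le_of_lt hε)) _ hεK (by simpa using hwF)).1
  simpa [smul_smul, inv_mul_cancel₀ (ne_of_gt hε)] using hF.smul_mem _ hεy ε⁻¹ (by positivity)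

end NormedConeFace

section ProjExposed

variable {V : Type*} [NormedAddCommGroup V] [InnerProductSpace ℝ V]

lemma real_inner_inv_norm_smul_le_norm (u v : V) : ⟪‖u‖⁻¹ • u, v⟫ ≤ ‖v‖ :=
  (real_inner_le_norm _ _).trans <| mul_le_of_le_one_left (norm_nonneg v) <|
    mem_closedBall_zero_iff.1 (inv_norm_smul_mem_unitClosedBall u)

def IsProjExposedFace (K F : Set V) : Prop :=
  (∃ P : V →ₗ[ℝ] V, P ∘ₗ P = P ∧ P '' K = F) ∧
    ∃ z : V, (∀ x ∈ K, 0 ≤ ⟪z, x⟫) ∧ F = {x | x ∈ K ∧ ⟪z, x⟫ = 0}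

lemma isProjExposedFace_self (K : Set V) : IsProjExposedFace K K :=
  ⟨⟨LinearMap.id, LinearMap.id_comp _, Set.image_id K⟩, 0, by simp, by simp⟩

end ProjExposed

section PowConeFaces

variable {m n : ℕ} {α : Fin n → ℝ}

lemma E.ext {x y : E m n} (h₁ : x.ofLp.1 = y.ofLp.1) (h₂ : ∀ i, x.ofLp.2 i = y.ofLp.2 i) :
    x = y :=
  WithLp.ofLp_injective 2 (Prod.ext h₁ (PiLp.ext h₂))

lemma E.inner_eq_sum (z x : E m n) :
    ⟪z, x⟫ = (∑ i, z.ofLp.1 i * x.ofLp.1 i) + ∑ i, z.ofLp.2 i * x.ofLp.2 i := by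
  simp [PiLp.inner_apply, mul_comm]

namespace PowCone

lemma smul_mem (hα : ∀ i, 0 ≤ α i) (hαsum : ∑ i, α i = 1) {x : E m n}
    (hx : x ∈ PowCone m n α) {c : ℝ} (hc : 0 ≤ c) : c • x ∈ PowCone m n α := by
  refine ⟨fun i => mul_nonneg hc (hx.1 i), ?_⟩
  have hprod : ∏ i, (c * x.ofLp.2 i) ^ α i = c * ∏ i, x.ofLp.2 i ^ α i := by
    simp_rw [Real.mul_rpow hc (hx.1 _), prod_mul_distrib,
      ← Real.rpow_sum_of_nonneg hc fun i _ => hα i, hαsum, Real.rpow_one]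
  change ‖c • x.ofLp.1‖ ≤ ∏ i, (c * x.ofLp.2 i) ^ α i
  rw [hprod, norm_smul, Real.norm_of_nonneg hc]
  exact mul_le_mul_of_nonneg_left hx.2 hc

lemma fst_eq_zero_of_snd_eq_zero {x : E m n} {i : Fin n} (hαi : α i ≠ 0)
    (hx : x ∈ PowCone m n α) (hi : x.ofLp.2 i = 0) : x.ofLp.1 = 0 :=
  norm_le_zero_iff.1 <| hx.2.trans_eq <|
    prod_eq_zero (mem_univ i) (by rw [hi, Real.zero_rpow hαi])

lemma snd_pos_of_fst_ne_zero (hα : ∀ i, α i ≠ 0) {x : E m n} (hx : x ∈ PowCone m n α)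
    (h : x.ofLp.1 ≠ 0) (i : Fin n) : 0 < x.ofLp.2 i :=
  (hx.1 i).lt_of_ne fun hi => h (fst_eq_zero_of_snd_eq_zero (hα i) hx hi.symm)

lemma mem_interior (hα : ∀ i, 0 ≤ α i) {x : E m n} (hpos : ∀ i, 0 < x.ofLp.2 i)
    (hlt : ‖x.ofLp.1‖ < ∏ i, x.ofLp.2 i ^ α i) : x ∈ interior (PowCone m n α) := by
  have hcont : Continuous fun x : E m n => ∏ i, x.ofLp.2 i ^ α i :=
    continuous_finsetProd _ fun i _ => (Real.continuous_rpow_const (hα i)).comp (by fun_prop)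
  have hopen :
      IsOpen {x : E m n | (∀ i, 0 < x.ofLp.2 i) ∧ ‖x.ofLp.1‖ < ∏ i, x.ofLp.2 i ^ α i} := by
    rw [Set.ofPred_and, Set.ofPred_forall]
    exact (isOpen_iInter_of_finite fun i => isOpen_lt continuous_const (by fun_prop)).inter
      (isOpen_lt (by fun_prop) hcont)
  refine interior_maximal (fun y hy => ?_) hopen ⟨hpos, hlt⟩
  exact show y ∈ PowCone m n α from ⟨fun i => (hy.1 i).le, hy.2.le⟩

end PowCone

def coordFace (m : ℕ) (J : Finset (Fin n)) : Set (E m n) :=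
  {x | x.ofLp.1 = 0 ∧ (∀ i, 0 ≤ x.ofLp.2 i) ∧ ∀ i ∉ J, x.ofLp.2 i = 0}

def coordProj (m : ℕ) (J : Finset (Fin n)) : E m n →ₗ[ℝ] E m n where
  toFun x := WithLp.toLp 2 (0, WithLp.toLp 2 fun i => if i ∈ J then x.ofLp.2 i else 0)
  map_add' x y := E.ext (by simp) fun i => by simp [ite_add_zero]
  map_smul' c x := E.ext (by simp) fun i => by simp

lemma coordProj_snd (J : Finset (Fin n)) (x : E m n) (i : Fin n) :
    (coordProj m J x).ofLp.2 i = if i ∈ J then x.ofLp.2 i else 0 := rfl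

def coordNormal (m : ℕ) (J : Finset (Fin n)) : E m n :=
  WithLp.toLp 2 (0, WithLp.toLp 2 fun i => if i ∈ J then 0 else 1)

lemma inner_coordNormal (J : Finset (Fin n)) (x : E m n) :
    ⟪coordNormal m J, x⟫ = ∑ i ∈ univ.filter (· ∉ J), x.ofLp.2 i := by
  rw [E.inner_eq_sum]
  simp [coordNormal, sum_filter]

lemma coordFace_subset_powCone (J : Finset (Fin n)) : coordFace m J ⊆ PowCone m n α :=
  fun x hx => ⟨hx.2.1, by
    rw [hx.1, norm_zero]
    exact prod_nonneg fun i _ => Real.rpow_nonneg (hx.2.1 i) _⟩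

lemma isProjExposedFace_coordFace (hα : ∀ i, α i ≠ 0) {J : Finset (Fin n)} (hJ : J ≠ univ) :
    IsProjExposedFace (PowCone m n α) (coordFace m J) := by
  refine ⟨⟨coordProj m J, LinearMap.ext fun x => E.ext rfl fun i => ?_, ?_⟩,
    coordNormal m J, fun x hx => ?_, ?_⟩
  · simp only [LinearMap.comp_apply, coordProj_snd]
    split_ifs <;> rfl
  · refine Set.Subset.antisymm ?_ fun x hx => ⟨x, coordFace_subset_powCone J hx, ?_⟩
    · rintro _ ⟨x, hx, rfl⟩
      refine ⟨rfl, fun i => ?_, fun i hi => by rw [coordProj_snd, if_neg hi]⟩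
      rw [coordProj_snd]
      split_ifs
      exacts [hx.1 i, le_rfl]
    · refine E.ext hx.1.symm fun i => ?_
      rw [coordProj_snd]
      split_ifs with hi
      exacts [rfl, (hx.2.2 i hi).symm]
  · rw [inner_coordNormal]
    exact sum_nonneg fun i _ => hx.1 i
  · obtain ⟨i₀, hi₀⟩ : ∃ i, i ∉ J := by simpa [eq_univ_iff_forall] using hJ
    ext x
    simp only [Set.mem_ofPred_eq, inner_coordNormal]
    refine ⟨fun hx => ⟨coordFace_subset_powCone J hx, sum_eq_zero fun i hi => ?_⟩, ?_⟩
    · exact hx.2.2 i (by simpa using hi)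
    · rintro ⟨hxK, hsum⟩
      have hzero : ∀ i ∉ J, x.ofLp.2 i = 0 := fun i hi =>
        (sum_eq_zero_iff_of_nonneg fun j _ => hxK.1 j).1 hsum i (by simpa using hi)
      exact ⟨PowCone.fst_eq_zero_of_snd_eq_zero (hα i₀) hxK (hzero i₀ hi₀), hxK.1, hzero⟩

/-- The gradient at `b` of `x ↦ ∏ i, x.ofLp.2 i ^ α i - ‖x.ofLp.1‖`. -/
def boundaryNormal (α : Fin n → ℝ) (b : E m n) : E m n :=
  WithLp.toLp 2 (-(‖b.ofLp.1‖⁻¹ • b.ofLp.1),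
    WithLp.toLp 2 fun i => α i * (∏ j, b.ofLp.2 j ^ α j) / b.ofLp.2 i)

lemma inner_boundaryNormal (b x : E m n) :
    ⟪boundaryNormal α b, x⟫ = (∏ j, b.ofLp.2 j ^ α j) * ∑ i, α i * (x.ofLp.2 i / b.ofLp.2 i)
      - ⟪‖b.ofLp.1‖⁻¹ • b.ofLp.1, x.ofLp.1⟫ := by
  simp only [boundaryNormal, WithLp.prod_inner_apply, inner_neg_left, PiLp.inner_apply,
    mul_sum]
  simp [div_eq_mul_inv]
  rw [neg_add_eq_sub]
  congr 1
  exact sum_congr rfl fun i _ => by ring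

lemma inner_boundaryNormal_nonneg (hα : ∀ i, 0 ≤ α i) (hαsum : ∑ i, α i = 1) {b x : E m n}
    (hb : ∀ i, 0 < b.ofLp.2 i) (hx : x ∈ PowCone m n α) : 0 ≤ ⟪boundaryNormal α b, x⟫ := by
  rw [inner_boundaryNormal]
  linarith [real_inner_inv_norm_smul_le_norm b.ofLp.1 x.ofLp.1, hx.2,
    prod_rpow_le_mul_sum hα hαsum hb hx.1]

lemma inner_boundaryNormal_self (hαsum : ∑ i, α i = 1) {b : E m n} (hb : ∀ i, 0 < b.ofLp.2 i)
    (hbd : ‖b.ofLp.1‖ = ∏ i, b.ofLp.2 i ^ α i) : ⟪boundaryNormal α b, b⟫ = 0 := by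
  have hb₁ : 0 < ‖b.ofLp.1‖ := hbd ▸ prod_pos fun i _ => Real.rpow_pos_of_pos (hb i) _
  have hsum : ∑ i, α i * (b.ofLp.2 i / b.ofLp.2 i) = 1 := by
    rw [← hαsum]
    exact sum_congr rfl fun i _ => by rw [div_self (hb i).ne', mul_one]
  rw [inner_boundaryNormal, hsum, real_inner_smul_left, real_inner_self_eq_norm_mul_norm,
    inv_mul_cancel_left₀ hb₁.ne', ← hbd]
  ring

lemma mem_ray_of_inner_boundaryNormal_eq_zero (hα : ∀ i, 0 < α i) (hαsum : ∑ i, α i = 1)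
    {b x : E m n} (hb : ∀ i, 0 < b.ofLp.2 i) (hbd : ‖b.ofLp.1‖ = ∏ i, b.ofLp.2 i ^ α i)
    (hx : x ∈ PowCone m n α) (h : ⟪boundaryNormal α b, x⟫ = 0) : x ∈ ray b := by
  set c := ∑ i, α i * (x.ofLp.2 i / b.ofLp.2 i)
  have hb₁ : 0 < ‖b.ofLp.1‖ := hbd ▸ prod_pos fun i _ => Real.rpow_pos_of_pos (hb i) _
  have hcs := real_inner_inv_norm_smul_le_norm b.ofLp.1 x.ofLp.1
  have hamgm := prod_rpow_le_mul_sum (fun i => (hα i).le) hαsum hb hx.1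
  rw [inner_boundaryNormal] at h
  -- `h` closes the chain `⟪b̄ / ‖b̄‖, x̄⟫ ≤ ‖x̄‖ ≤ ∏ x̃ᵢ^αᵢ ≤ ‖b̄‖ c`: equality throughout
  have hsnd := eq_mul_of_prod_rpow_eq_mul_sum hα hαsum hb hx.1 (by linarith [hx.2])
  have hnorm : ‖x.ofLp.1‖ = c * ‖b.ofLp.1‖ := by rw [hbd]; linarith [hx.2]
  have hfst : x.ofLp.1 = c • b.ofLp.1 := by
    have hux : ⟪‖b.ofLp.1‖⁻¹ • b.ofLp.1, x.ofLp.1⟫ = ‖x.ofLp.1‖ := by linarith [hx.2]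
    rw [real_inner_smul_left] at hux
    have hinner : ⟪b.ofLp.1, x.ofLp.1⟫ = ‖b.ofLp.1‖ * ‖x.ofLp.1‖ := by
      rw [← hux, mul_inv_cancel_left₀ hb₁.ne']
    calc x.ofLp.1 = ‖b.ofLp.1‖⁻¹ • ‖b.ofLp.1‖ • x.ofLp.1 := (inv_smul_smul₀ hb₁.ne' _).symm
      _ = c • b.ofLp.1 := by
        rw [← inner_eq_norm_mul_iff_real.1 hinner, hnorm, smul_smul, inv_mul_eq_div,
          mul_div_cancel_right₀ _ hb₁.ne']
  have hc : 0 ≤ c := sum_nonneg fun i _ => mul_nonneg (hα i).le (div_nonneg (hx.1 i) (hb i).le)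
  exact ⟨c, hc, E.ext hfst.symm fun i => (hsnd i).symm⟩

lemma isProjExposedFace_ray (hα : ∀ i, 0 < α i) (hαsum : ∑ i, α i = 1) {b : E m n}
    (hb : ∀ i, 0 < b.ofLp.2 i) (hbd : ‖b.ofLp.1‖ = ∏ i, b.ofLp.2 i ^ α i) :
    IsProjExposedFace (PowCone m n α) (ray b) := by
  have hbK : b ∈ PowCone m n α := ⟨fun i => (hb i).le, hbd.le⟩
  have hray : ∀ c : ℝ, 0 ≤ c → c • b ∈ PowCone m n α := fun c hc =>
    PowCone.smul_mem (fun i => (hα i).le) hαsum hbK hc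
  -- the projection is `x ↦ (∑ x̃ᵢ / ∑ b̃ᵢ) • b`, and `⟪coordNormal m ∅, x⟫ = ∑ x̃ᵢ`
  have hT : 0 < ⟪coordNormal m ∅, b⟫ := by
    rw [inner_coordNormal]
    have : (univ : Finset (Fin n)).Nonempty := nonempty_of_sum_ne_zero (hαsum ▸ one_ne_zero)
    exact sum_pos (fun i _ => hb i) (by simpa using this)
  refine ⟨exists_idempotent_image_eq_ray (⟪coordNormal m ∅, b⟫⁻¹ • innerₛₗ ℝ (coordNormal m ∅))
      (by rw [LinearMap.smul_apply, innerₛₗ_apply_apply, smul_eq_mul, inv_mul_cancel₀ hT.ne'])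
      (fun x hx => ?_) hray,
    boundaryNormal α b, fun x hx => inner_boundaryNormal_nonneg (fun i => (hα i).le) hαsum hb hx,
    Set.Subset.antisymm ?_ fun x hx =>
      mem_ray_of_inner_boundaryNormal_eq_zero hα hαsum hb hbd hx.1 hx.2⟩
  · rw [LinearMap.smul_apply, innerₛₗ_apply_apply, smul_eq_mul]
    refine mul_nonneg (inv_nonneg.2 hT.le) ?_
    rw [inner_coordNormal]
    exact sum_nonneg fun i _ => hx.1 i
  · rintro _ ⟨c, hc, rfl⟩
    refine ⟨hray c hc, ?_⟩
    rw [real_inner_smul_right, inner_boundaryNormal_self hαsum hb hbd, mul_zero]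

namespace IsConeFace

variable {F : Set (E m n)}

lemma exists_mem_forall_snd_pos (hF : IsConeFace (PowCone m n α) F) :
    ∃ Y ∈ F, ∀ x ∈ F, ∀ i, 0 < x.ofLp.2 i → 0 < Y.ofLp.2 i := by
  have hwit : ∀ i, ∃ w ∈ F, ∀ x ∈ F, 0 < x.ofLp.2 i → 0 < w.ofLp.2 i := by
    intro i
    by_cases h : ∃ x ∈ F, 0 < x.ofLp.2 i
    · obtain ⟨w, hw, hwi⟩ := h
      exact ⟨w, hw, fun _ _ _ => hwi⟩
    · push Not at h
      exact ⟨0, hF.zero_mem, fun x hx hxi => absurd (h x hx) (not_le.2 hxi)⟩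
  choose w hwF hw using hwit
  refine ⟨∑ j, w j, hF.sum_mem _ fun j _ => hwF j, fun x hx i hxi => ?_⟩
  rw [WithLp.ofLp_sum, Prod.snd_sum, WithLp.ofLp_sum, Finset.sum_apply]
  exact sum_pos' (fun j _ => (hF.subset (hwF j)).1 i) ⟨i, mem_univ i, hw i x hx hxi⟩

lemma toLp_mem_of_norm_le (hF : IsConeFace (PowCone m n α) F) {Y : E m n} (hYF : Y ∈ F)
    (hY : Y.ofLp.1 = 0) {v : EuclideanSpace ℝ (Fin m)} (hv : ‖v‖ ≤ ∏ i, Y.ofLp.2 i ^ α i) :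
    WithLp.toLp 2 (v, Y.ofLp.2) ∈ F := by
  have hY₂ := (hF.subset hYF).1
  refine (hF.mem_of_add_mem (WithLp.toLp 2 (v, Y.ofLp.2)) ⟨hY₂, hv⟩
    (WithLp.toLp 2 (-v, Y.ofLp.2)) ⟨hY₂, by rwa [norm_neg]⟩ ?_).1
  convert hF.smul_mem Y hYF 2 zero_le_two using 1
  refine E.ext ?_ fun i => by simp; ring
  change v + -v = (2 : ℝ) • Y.ofLp.1
  rw [hY, add_neg_cancel, smul_zero]

lemma coordFace_subset (hF : IsConeFace (PowCone m n α) F) {Y : E m n} (hYF : Y ∈ F)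
    (hY : Y.ofLp.1 = 0) : coordFace m (univ.filter fun i => 0 < Y.ofLp.2 i) ⊆ F := by
  set J := univ.filter fun i => 0 < Y.ofLp.2 i
  have hJ : ∀ i ∈ J, 0 < Y.ofLp.2 i := fun i hi => (mem_filter.1 hi).2
  have hJc : ∀ i ∉ J, Y.ofLp.2 i = 0 := fun i hi =>
    le_antisymm (not_lt.1 fun h => hi (mem_filter.2 ⟨mem_univ i, h⟩)) ((hF.subset hYF).1 i)
  intro x hx
  -- `x ≤ t • Y` coordinatewise, so `x` is a summand of `t • Y ∈ F`
  set t := ∑ i ∈ J, x.ofLp.2 i / Y.ofLp.2 i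
  have ht : 0 ≤ t := sum_nonneg fun i hi => div_nonneg (hx.2.1 i) (hJ i hi).le
  have hrest : t • Y - x ∈ coordFace m J := by
    refine ⟨?_, fun i => ?_, fun i hi => ?_⟩
    · change t • Y.ofLp.1 - x.ofLp.1 = 0
      rw [hY, hx.1, smul_zero, sub_zero]
    · change 0 ≤ t * Y.ofLp.2 i - x.ofLp.2 i
      by_cases hi : i ∈ J
      · have hle : x.ofLp.2 i / Y.ofLp.2 i ≤ t :=
          single_le_sum (fun j hj => div_nonneg (hx.2.1 j) (hJ j hj).le) hi
        linarith [(div_le_iff₀ (hJ i hi)).1 hle]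
      · rw [hJc i hi, hx.2.2 i hi, mul_zero, sub_zero]
    · change t * Y.ofLp.2 i - x.ofLp.2 i = 0
      rw [hJc i hi, hx.2.2 i hi, mul_zero, sub_zero]
  exact (hF.mem_of_add_mem x (coordFace_subset_powCone J hx) _ (coordFace_subset_powCone J hrest)
    (by simpa using hF.smul_mem Y hYF t ht)).1

lemma eq_coordFace (hm : 0 < m) (hF : IsConeFace (PowCone m n α) F)
    (hfst : ∀ x ∈ F, x.ofLp.1 = 0) : ∃ J ≠ univ, F = coordFace m J := by
  obtain ⟨Y, hYF, hY⟩ := hF.exists_mem_forall_snd_pos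
  refine ⟨univ.filter fun i => 0 < Y.ofLp.2 i, fun hJ => ?_,
    Set.Subset.antisymm (fun x hx => ⟨hfst x hx, (hF.subset hx).1, fun i hi => ?_⟩)
      (hF.coordFace_subset hYF (hfst Y hYF))⟩
  · have hpos : 0 < ∏ i, Y.ofLp.2 i ^ α i := prod_pos fun i _ =>
      Real.rpow_pos_of_pos (mem_filter.1 (eq_univ_iff_forall.1 hJ i)).2 _
    have hv := hfst _ (hF.toLp_mem_of_norm_le hYF (hfst Y hYF)
      (v := EuclideanSpace.single ⟨0, hm⟩ (∏ i, Y.ofLp.2 i ^ α i))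
      (by rw [PiLp.norm_single, Real.norm_of_nonneg hpos.le]))
    exact hpos.ne' (by simpa using congrArg (· ⟨0, hm⟩) hv)
  · exact le_antisymm (not_lt.1 fun h => hi (mem_filter.2 ⟨mem_univ i, hY x hx i h⟩))
      ((hF.subset hx).1 i)

lemma eq_ray (hα : ∀ i, 0 < α i) (hαsum : ∑ i, α i = 1) (hF : IsConeFace (PowCone m n α) F)
    {x₀ : E m n} (hx₀F : x₀ ∈ F) (hx₀ : x₀.ofLp.1 ≠ 0)
    (hbd : ∀ s ∈ F, (∀ i, 0 < s.ofLp.2 i) → ‖s.ofLp.1‖ = ∏ i, s.ofLp.2 i ^ α i) :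
    F = ray x₀ := by
  have hx₀pos := PowCone.snd_pos_of_fst_ne_zero (fun i => (hα i).ne') (hF.subset hx₀F) hx₀
  refine Set.Subset.antisymm (fun y hy => ?_) ?_
  · set s := x₀ + y
    have hspos : ∀ i, 0 < s.ofLp.2 i := fun i =>
      add_pos_of_pos_of_nonneg (hx₀pos i) ((hF.subset hy).1 i)
    have hsbd := hbd s (hF.add_mem hx₀F hy) hspos
    have h₀ := inner_boundaryNormal_nonneg (fun i => (hα i).le) hαsum hspos (hF.subset hx₀F)
    have h₁ := inner_boundaryNormal_nonneg (fun i => (hα i).le) hαsum hspos (hF.subset hy)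
    have hsum := inner_boundaryNormal_self hαsum hspos hsbd
    rw [inner_add_right] at hsum
    obtain ⟨c, hc, hcs⟩ := mem_ray_of_inner_boundaryNormal_eq_zero hα hαsum hspos hsbd
      (hF.subset hx₀F) (by linarith)
    obtain ⟨d, hd, hds⟩ := mem_ray_of_inner_boundaryNormal_eq_zero hα hαsum hspos hsbd
      (hF.subset hy) (by linarith)
    have hc₀ : c ≠ 0 := by
      rintro rfl
      exact hx₀ (by rw [← hcs, zero_smul]; rfl)
    exact ⟨d / c, div_nonneg hd hc, by rw [← hcs, smul_smul, div_mul_cancel₀ _ hc₀, hds]⟩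
  · rintro _ ⟨c, hc, rfl⟩
    exact hF.smul_mem x₀ hx₀F c hc

lemma eq_powCone_or_ray_or_coordFace (hm : 0 < m) (hα : ∀ i, 0 < α i) (hαsum : ∑ i, α i = 1)
    (hF : IsConeFace (PowCone m n α) F) :
    F = PowCone m n α ∨
      (∃ b : E m n, (∀ i, 0 < b.ofLp.2 i) ∧ ‖b.ofLp.1‖ = ∏ i, b.ofLp.2 i ^ α i ∧ F = ray b) ∨
      ∃ J ≠ univ, F = coordFace m J := by
  by_cases hfst : ∀ x ∈ F, x.ofLp.1 = 0
  · exact Or.inr (Or.inr (hF.eq_coordFace hm hfst))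
  push Not at hfst
  obtain ⟨x₀, hx₀F, hx₀⟩ := hfst
  by_cases hint : ∃ w ∈ F, (∀ i, 0 < w.ofLp.2 i) ∧ ‖w.ofLp.1‖ < ∏ i, w.ofLp.2 i ^ α i
  · obtain ⟨w, hwF, hwpos, hwlt⟩ := hint
    have hK : ∀ x ∈ PowCone m n α, ∀ c : ℝ, 0 ≤ c → c • x ∈ PowCone m n α :=
      fun x hx c hc => PowCone.smul_mem (fun i => (hα i).le) hαsum hx hc
    exact Or.inl <| hF.eq_of_mem_interior hK hwF <|
      PowCone.mem_interior (fun i => (hα i).le) hwpos hwlt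
  have hbd : ∀ s ∈ F, (∀ i, 0 < s.ofLp.2 i) → ‖s.ofLp.1‖ = ∏ i, s.ofLp.2 i ^ α i :=
    fun s hs hpos => (hF.subset hs).2.antisymm (not_lt.1 fun hlt => hint ⟨s, hs, hpos, hlt⟩)
  have hx₀pos := PowCone.snd_pos_of_fst_ne_zero (fun i => (hα i).ne') (hF.subset hx₀F) hx₀
  exact Or.inr (Or.inl ⟨x₀, hx₀pos, hbd x₀ hx₀F hx₀pos, hF.eq_ray hα hαsum hx₀F hx₀ hbd⟩)

end IsConeFace

end PowConeFaces

theorem powCone_projectionally_exposed_general (m n : ℕ) (hm : 1 ≤ m) (α : Fin n → ℝ)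
    (hα : ∀ i, 0 < α i ∧ α i < 1) (hαsum : ∑ i, α i = 1) :
    ∀ F : Set (E m n), F.Nonempty → IsClosed F → Convex ℝ F →
      (∀ x ∈ F, ∀ c : ℝ, 0 ≤ c → c • x ∈ F) → F ⊆ PowCone m n α →
      (∀ x ∈ PowCone m n α, ∀ y ∈ PowCone m n α, x + y ∈ F → x ∈ F ∧ y ∈ F) →
      (∃ P : E m n →ₗ[ℝ] E m n, P ∘ₗ P = P ∧ ⇑P '' PowCone m n α = F) ∧
      (∃ z : E m n,
        (∀ x ∈ PowCone m n α, 0 ≤ (∑ i, z.ofLp.1 i * x.ofLp.1 i) + (∑ i, z.ofLp.2 i * x.ofLp.2 i)) ∧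
        F = {x | x ∈ PowCone m n α ∧
              (∑ i, z.ofLp.1 i * x.ofLp.1 i) + (∑ i, z.ofLp.2 i * x.ofLp.2 i) = 0}) := by
  intro F hFne _ hFconv hFsmul hFK hFext
  have hα₀ : ∀ i, 0 < α i := fun i => (hα i).1
  have hF : IsProjExposedFace (PowCone m n α) F := by
    rcases IsConeFace.eq_powCone_or_ray_or_coordFace hm hα₀ hαsum
        ⟨hFne, hFconv, hFsmul, hFK, hFext⟩ with rfl | ⟨b, hb, hbd, rfl⟩ | ⟨J, hJ, rfl⟩
    · exact isProjExposedFace_self _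
    · exact isProjExposedFace_ray hα₀ hαsum hb hbd
    · exact isProjExposedFace_coordFace (fun i => (hα₀ i).ne') hJ
  simpa only [IsProjExposedFace, E.inner_eq_sum] using hF

/-- The generalized power cone is projectionally exposed: every (nonempty) face `F` is the
image of the cone under an idempotent linear map, and in particular every face is exposed. -/
theorem powCone_projectionally_exposed (m n : ℕ) (hm : 1 ≤ m) (hn : 2 ≤ n) (α : Fin n → ℝ)
    (hα : ∀ i, 0 < α i ∧ α i < 1) (hαsum : ∑ i, α i = 1) :
    ∀ F : Set (E m n), F.Nonempty → IsClosed F → Convex ℝ F →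
      (∀ x ∈ F, ∀ c : ℝ, 0 ≤ c → c • x ∈ F) → F ⊆ PowCone m n α →
      (∀ x ∈ PowCone m n α, ∀ y ∈ PowCone m n α, x + y ∈ F → x ∈ F ∧ y ∈ F) →
      (∃ P : E m n →ₗ[ℝ] E m n, P ∘ₗ P = P ∧ ⇑P '' PowCone m n α = F) ∧
      (∃ z : E m n,
        (∀ x ∈ PowCone m n α, 0 ≤ (∑ i, z.ofLp.1 i * x.ofLp.1 i) + (∑ i, z.ofLp.2 i * x.ofLp.2 i)) ∧
        F = {x | x ∈ PowCone m n α ∧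
              (∑ i, z.ofLp.1 i * x.ofLp.1 i) + (∑ i, z.ofLp.2 i * x.ofLp.2 i) = 0}) :=
  powCone_projectionally_exposed_general m n hm α hα hαsum
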